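/- arXiv:1409.1423 — 5 statements merged into one kernel-verified Lean document; each statement's English description precedes it below -/
import Mathlib

section
/- If f : 𝔻 → 𝔻 is holomorphic and there exists a positive integer n such that for every w ∈ 𝔻 the equation f(z) = w has exactly n solutions in 𝔻 counting multiplicities, then f is a finite Blaschke product of degree n. -/
/-!
Let `a₁, …, aₙ` be the zeros of `f` listed with multiplicity (there are `n` of them, since `0`
has valence `n`) and `B` the Blaschke product with these zeros. Dividing them out gives
`f = B g` with `g` holomorphic and zero-free on `𝔻`. The valence hypothesis makes `f` proper:
if `f` took values near some `w₀ ∈ 𝔻` arbitrarily close to the unit circle, then, because each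
zero of `f - w₀` of order `m` splits into `m` distinct preimages of every nearby value, some
value would have `n + 1` preimages. So `|f| → 1` at the circle, as does `|B|`, and the maximum
principle applied to `g` and `1 / g` gives `|g| = 1`, hence `g` is a unimodular constant.
-/

open Complex Metric MeasureTheory Set Filter

noncomputable def blaschkeFactor (a z : ℂ) : ℂ := (z - a) / (1 - (starRingEnd ℂ) a * z)

def IsFiniteBlaschkeDeg (n : ℕ) (f : ℂ → ℂ) : Prop :=
  ∃ (lam : ℂ) (a : Fin n → ℂ), ‖lam‖ = 1 ∧ (∀ i, a i ∈ ball (0:ℂ) 1) ∧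
    ∀ z ∈ ball (0:ℂ) 1, f z = lam * ∏ i, blaschkeFactor (a i) z

def IsFiniteBlaschke (f : ℂ → ℂ) : Prop := ∃ n : ℕ, 0 < n ∧ IsFiniteBlaschkeDeg n f

noncomputable def zeroOrder (f : ℂ → ℂ) (z₀ : ℂ) : ℕ :=
  sInf {n : ℕ | ∃ g : ℂ → ℂ, AnalyticAt ℂ g z₀ ∧ g z₀ ≠ 0 ∧
    ∀ᶠ z in nhds z₀, f z = (z - z₀) ^ n * g z}

def HasValence (f : ℂ → ℂ) (U : Set ℂ) (w : ℂ) (n : ℕ) : Prop :=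
  ∃ hS : {z ∈ U | f z = w}.Finite, ∑ z ∈ hS.toFinset, zeroOrder (fun x => f x - w) z = n

open Topology

theorem zeroOrder_eq_analyticOrderNatAt {f : ℂ → ℂ} {z₀ : ℂ} (hf : AnalyticAt ℂ f z₀) :
    zeroOrder f z₀ = analyticOrderNatAt f z₀ := by
  have hset : {n : ℕ | ∃ g : ℂ → ℂ, AnalyticAt ℂ g z₀ ∧ g z₀ ≠ 0 ∧
      ∀ᶠ z in 𝓝 z₀, f z = (z - z₀) ^ n * g z} = {n : ℕ | analyticOrderAt f z₀ = n} := by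
    ext n
    simp [hf.analyticOrderAt_eq_natCast]
  rw [zeroOrder, hset, analyticOrderNatAt]
  cases analyticOrderAt f z₀ with
  | top => simp
  | coe m => simp

section Valence

variable {f : ℂ → ℂ} {U : Set ℂ}

theorem AnalyticOnNhd.analyticOrderAt_sub_ne_top (hf : AnalyticOnNhd ℂ f U) (hU : IsOpen U)
    (hUc : IsPreconnected U) {w : ℂ} (hfin : {z ∈ U | f z = w}.Finite) {z : ℂ} (hz : z ∈ U) :
    analyticOrderAt (fun x => f x - w) z ≠ ⊤ := by
  intro htop
  have hloc : f =ᶠ[𝓝 z] fun _ => w := by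
    filter_upwards [analyticOrderAt_eq_top.mp htop] with x hx
    exact sub_eq_zero.mp hx
  have hsub : U ⊆ {z ∈ U | f z = w} := fun x hx =>
    ⟨hx, hf.eqOn_of_preconnected_of_eventuallyEq analyticOnNhd_const hUc hz hloc hx⟩
  exact (infinite_of_mem_nhds z (hU.mem_nhds hz)).mono hsub hfin

theorem HasValence.card_le (hf : AnalyticOnNhd ℂ f U) (hU : IsOpen U) (hUc : IsPreconnected U)
    {w : ℂ} {n : ℕ} (hv : HasValence f U w n) {T : Finset ℂ} (hT : ∀ z ∈ T, z ∈ U ∧ f z = w) :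
    T.card ≤ n := by
  obtain ⟨hS, rfl⟩ := hv
  have hpos : ∀ z ∈ T, 1 ≤ zeroOrder (fun x => f x - w) z := fun z hz => by
    obtain ⟨hzU, hfz⟩ := hT z hz
    have hA : AnalyticAt ℂ (fun x => f x - w) z := (hf z hzU).sub analyticAt_const
    have hzero : analyticOrderAt (fun x => f x - w) z ≠ 0 :=
      analyticOrderAt_ne_zero.mpr ⟨hA, sub_eq_zero.mpr hfz⟩
    rw [zeroOrder_eq_analyticOrderNatAt hA, Nat.one_le_iff_ne_zero,
      analyticOrderNatAt, Ne, ENat.toNat_eq_zero, not_or]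
    exact ⟨hzero, hf.analyticOrderAt_sub_ne_top hU hUc hS hzU⟩
  calc T.card = ∑ _ ∈ T, 1 := Finset.card_eq_sum_ones T
    _ ≤ ∑ z ∈ T, zeroOrder (fun x => f x - w) z := Finset.sum_le_sum hpos
    _ ≤ ∑ z ∈ hS.toFinset, zeroOrder (fun x => f x - w) z :=
      Finset.sum_le_sum_of_subset fun z hz => hS.mem_toFinset.mpr (hT z hz)

theorem HasValence.exists_multiset_analyticOrderAt_eq (hf : AnalyticOnNhd ℂ f U) (hU : IsOpen U)
    (hUc : IsPreconnected U) {n : ℕ} (hv : HasValence f U 0 n) :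
    ∃ Z : Multiset ℂ, Multiset.card Z = n ∧ (∀ a ∈ Z, a ∈ U) ∧
      ∀ z ∈ U, analyticOrderAt f z = Z.count z := by
  classical
  obtain ⟨hS, hsum⟩ := hv
  simp only [sub_zero] at hS hsum
  refine ⟨∑ s ∈ hS.toFinset, Multiset.replicate (analyticOrderNatAt f s) s, ?_, ?_, ?_⟩
  · rw [Multiset.card_sum, ← hsum]
    refine Finset.sum_congr rfl fun s hs => ?_
    rw [Multiset.card_replicate, zeroOrder_eq_analyticOrderNatAt (hf s (hS.mem_toFinset.mp hs).1)]
  · intro a ha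
    obtain ⟨s, hs, has⟩ := Multiset.mem_sum.mp ha
    rw [Multiset.eq_of_mem_replicate has]
    exact (hS.mem_toFinset.mp hs).1
  · intro z hz
    simp only [Multiset.count_sum', Multiset.count_replicate, Finset.sum_ite_eq',
      Set.Finite.mem_toFinset]
    split_ifs with hfz
    · have := hf.analyticOrderAt_sub_ne_top hU hUc hS hz
      simp only [sub_zero] at this
      exact (ENat.natCast_toNat this).symm
    · exact analyticOrderAt_eq_zero.mpr (Or.inr fun h => hfz ⟨hz, h⟩)

end Valence

theorem Complex.card_nthRootsFinset {m : ℕ} (hm : m ≠ 0) {u : ℂ} (hu : u ≠ 0) :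
    (Polynomial.nthRootsFinset m u).card = m := by
  have hζ := Complex.isPrimitiveRoot_exp m hm
  rw [Polynomial.nthRootsFinset, Multiset.toFinset_card_of_nodup (hζ.nthRoots_nodup hu),
    hζ.card_nthRoots, if_pos (IsAlgClosed.exists_pow_nat_eq u (Nat.pos_of_ne_zero hm))]

theorem AnalyticAt.exists_map_nhds_eq_and_eventuallyEq_pow {F : ℂ → ℂ} {s : ℂ} {m : ℕ}
    (hF : AnalyticAt ℂ F s) (hm : analyticOrderAt F s = m) (hm0 : m ≠ 0) :
    ∃ φ : ℂ → ℂ, map φ (𝓝 s) = 𝓝 0 ∧ F =ᶠ[𝓝 s] φ ^ m := by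
  obtain ⟨g, hg, hgs, hFg⟩ := hF.analyticOrderAt_eq_natCast.mp hm
  obtain ⟨c, hc⟩ := IsAlgClosed.exists_pow_nat_eq (g s) (Nat.pos_of_ne_zero hm0)
  -- an analytic `m`-th root of `g` near `s`, normalised so that its value at `s` is `c`
  set r : ℂ → ℂ := fun z => c * Complex.exp (Complex.log (g z / g s) / m)
  have hr : AnalyticAt ℂ r s := by
    refine analyticAt_const.mul (((analyticAt_clog ?_).comp (hg.div analyticAt_const hgs)).div
      analyticAt_const (Nat.cast_ne_zero.mpr hm0)).cexp
    simp [hgs]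
  have hrm : ∀ᶠ z in 𝓝 s, r z ^ m = g z := by
    filter_upwards [hg.continuousAt.eventually_ne hgs] with z hz
    rw [mul_pow, hc, ← exp_nat_mul, mul_div_cancel₀ _ (Nat.cast_ne_zero.mpr hm0),
      exp_log (div_ne_zero hz hgs), mul_div_cancel₀ _ hgs]
  have hrs : r s ≠ 0 := by
    simp only [r, div_self hgs, log_one, zero_div, exp_zero, mul_one]
    rintro rfl
    exact hgs (by rw [← hc, zero_pow hm0])
  refine ⟨fun z => (z - s) * r z, ?_, ?_⟩
  · have hd : HasDerivAt (fun z => (z - s) * r z) (r s) s := by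
      simpa using ((hasDerivAt_id s).sub_const s).fun_mul hr.differentiableAt.hasDerivAt
    have hφ : AnalyticAt ℂ (fun z => (z - s) * r z) s := (analyticAt_id.sub analyticAt_const).mul hr
    have hstrict := hφ.hasStrictDerivAt
    rw [hd.deriv] at hstrict
    simpa using hstrict.map_nhds_eq hrs
  · filter_upwards [hFg, hrm] with z h1 h2
    simp [h1, mul_pow, h2]

theorem AnalyticAt.eventually_exists_finset_card_eq {F : ℂ → ℂ} {s : ℂ} (hF : AnalyticAt ℂ F s)
    {ρ : ℝ} (hρ : 0 < ρ) :
    ∀ᶠ w in 𝓝[≠] F s, ∃ T : Finset ℂ, T.card = analyticOrderNatAt (fun z => F z - F s) s ∧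
      ∀ z ∈ T, dist z s < ρ ∧ F z = w := by
  set m := analyticOrderNatAt (fun z => F z - F s) s
  rcases eq_or_ne m 0 with hm0 | hm0
  · exact Eventually.of_forall fun _ => ⟨∅, by simp [hm0], by simp⟩
  have hm : analyticOrderAt (fun z => F z - F s) s = m :=
    (ENat.natCast_toNat (fun h => hm0 (by simp [m, analyticOrderNatAt, h]))).symm
  obtain ⟨φ, hφ, hFφ⟩ := (hF.sub analyticAt_const).exists_map_nhds_eq_and_eventuallyEq_pow hm hm0
  have himage : φ '' {z | dist z s < ρ ∧ F z - F s = φ z ^ m} ∈ 𝓝 0 := by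
    rw [← hφ]
    exact image_mem_map (inter_mem (ball_mem_nhds s hρ) hFφ)
  obtain ⟨ε, hε, hεsub⟩ := Metric.mem_nhds_iff.mp himage
  filter_upwards [nhdsWithin_le_nhds (ball_mem_nhds (F s) (pow_pos hε m)),
    self_mem_nhdsWithin] with w hw hws
  have hu : w - F s ≠ 0 := sub_ne_zero.mpr hws
  have hroot : ∀ ζ ∈ Polynomial.nthRootsFinset m (w - F s), ∃ z,
      (dist z s < ρ ∧ F z - F s = φ z ^ m) ∧ φ z = ζ := fun ζ hζ => by
    rw [Polynomial.mem_nthRootsFinset (Nat.pos_of_ne_zero hm0)] at hζ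
    refine hεsub (mem_ball_zero_iff.mpr ((pow_lt_pow_iff_left₀ (norm_nonneg _) hε.le hm0).mp ?_))
    rwa [← norm_pow, hζ, ← dist_eq_norm]
  choose! ψ hψ hφψ using hroot
  refine ⟨(Polynomial.nthRootsFinset m (w - F s)).image ψ, ?_, ?_⟩
  · rw [Finset.card_image_of_injOn, Complex.card_nthRootsFinset hm0 hu]
    intro ζ hζ ζ' hζ' h
    rw [← hφψ ζ hζ, ← hφψ ζ' hζ', h]
  · simp only [Finset.mem_image]
    rintro z ⟨ζ, hζ, rfl⟩
    refine ⟨(hψ ζ hζ).1, ?_⟩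
    have := (hψ ζ hζ).2
    rw [hφψ ζ hζ, (Polynomial.mem_nthRootsFinset (Nat.pos_of_ne_zero hm0) _).mp hζ] at this
    exact sub_left_inj.mp this

theorem Finset.exists_pos_le_forall_two_mul_le_dist (S : Finset ℂ) {ρ : ℝ} (hρ : 0 < ρ) :
    ∃ ρ' > 0, ρ' ≤ ρ ∧ ∀ s ∈ S, ∀ t ∈ S, s ≠ t → 2 * ρ' ≤ dist s t := by
  have hsmall : ∀ᶠ r in 𝓝[>] (0 : ℝ), ∀ s ∈ S, ∀ t ∈ S, s ≠ t → 2 * r ≤ dist s t := by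
    simp only [eventually_all_finset]
    intro s _ t _
    by_cases hst : s = t
    · simp [hst]
    · filter_upwards [nhdsWithin_le_nhds (Iio_mem_nhds (half_pos (dist_pos.mpr hst)))]
        with r hr _
      linarith [Set.mem_Iio.mp hr]
  obtain ⟨ρ', ⟨hρ'S, hρ'ρ⟩, hρ'⟩ :=
    (hsmall.and (Ioc_mem_nhdsGT hρ)).and self_mem_nhdsWithin |>.exists
  exact ⟨ρ', hρ', hρ'ρ.2, hρ'S⟩

theorem eventually_exists_finset_card_eq_sum {f : ℂ → ℂ} {S : Finset ℂ} {w₀ : ℂ}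
    (hf : ∀ s ∈ S, AnalyticAt ℂ f s) (hS : ∀ s ∈ S, f s = w₀) {ρ : ℝ} (hρ : 0 < ρ) :
    ∀ᶠ w in 𝓝[≠] w₀, ∃ T : Finset ℂ,
      T.card = ∑ s ∈ S, analyticOrderNatAt (fun z => f z - w₀) s ∧
      ∀ z ∈ T, f z = w ∧ ∃ s ∈ S, dist z s < ρ := by
  obtain ⟨ρ', hρ', hρ'ρ, hsep⟩ := S.exists_pos_le_forall_two_mul_le_dist hρ
  have hlocal : ∀ s ∈ S, ∀ᶠ w in 𝓝[≠] w₀, ∃ T : Finset ℂ,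
      T.card = analyticOrderNatAt (fun z => f z - w₀) s ∧ ∀ z ∈ T, dist z s < ρ' ∧ f z = w :=
    fun s hs => hS s hs ▸ (hf s hs).eventually_exists_finset_card_eq hρ'
  filter_upwards [(eventually_all_finset S).mpr hlocal] with w hw
  choose! T hTcard hT using hw
  have hdisj : (S : Set ℂ).PairwiseDisjoint T := fun s hs t ht hst =>
    Finset.disjoint_left.mpr fun z hzs hzt => by
      have := dist_triangle_left s t z
      linarith [(hT s hs z hzs).1, (hT t ht z hzt).1, hsep s hs t ht hst]
  refine ⟨S.biUnion T, by rw [Finset.card_biUnion hdisj]; exact Finset.sum_congr rfl hTcard, ?_⟩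
  simp only [Finset.mem_biUnion]
  rintro z ⟨s, hs, hz⟩
  exact ⟨(hT s hs z hz).2, s, hs, (hT s hs z hz).1.trans_le hρ'ρ⟩

section Boundary

variable {f : ℂ → ℂ} {n : ℕ}

/-- The `n` preimages of `w₀`, counted with multiplicity, split into `n` distinct preimages of
every nearby value, all in a compact part of the disc; one more preimage near the unit circle
would exceed the valence. -/
theorem not_mapClusterPt_of_hasValence (hf : AnalyticOnNhd ℂ f (ball 0 1))
    (hval : ∀ w ∈ ball (0 : ℂ) 1, HasValence f (ball 0 1) w n) {w₀ : ℂ}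
    (hw₀ : w₀ ∈ ball (0 : ℂ) 1) : ¬ MapClusterPt w₀ (comap norm (𝓝[<] 1)) f := by
  intro hclus
  obtain ⟨hS, hsum⟩ := hval w₀ hw₀
  set S := hS.toFinset
  have hSmem : ∀ s ∈ S, s ∈ ball (0 : ℂ) 1 ∧ f s = w₀ := fun s hs => hS.mem_toFinset.mp hs
  have hsum' : ∑ s ∈ S, analyticOrderNatAt (fun z => f z - w₀) s = n := hsum ▸
    Finset.sum_congr rfl fun s hs =>
      (zeroOrder_eq_analyticOrderNatAt ((hf s (hSmem s hs).1).sub analyticAt_const)).symm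
  set R : ℝ := ((S.sup (‖·‖₊) : NNReal) : ℝ)
  have hR : R < 1 := by
    have : S.sup (‖·‖₊) < 1 :=
      Finset.sup_lt_iff one_pos |>.mpr fun s hs => mem_ball_zero_iff.mp (hSmem s hs).1
    exact_mod_cast this
  have hSR : ∀ s ∈ S, ‖s‖ ≤ R := fun s hs => by
    exact_mod_cast Finset.le_sup (f := (‖·‖₊)) hs
  have hρ : 0 < (1 - R) / 2 := by linarith
  have hsplit := eventually_exists_finset_card_eq_sum (fun s hs => hf s (hSmem s hs).1)
    (fun s hs => (hSmem s hs).2) hρ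
  have hgood := (isOpen_ball.eventually_mem hw₀).and (eventually_nhdsWithin_iff.mp hsplit)
  have hfar : ∀ᶠ z : ℂ in comap norm (𝓝[<] 1), ‖z‖ ∈ Ioo ((1 + R) / 2) 1 :=
    tendsto_comap.eventually (Ioo_mem_nhdsLT (by linarith))
  obtain ⟨z, hzw, hz⟩ := ((mapClusterPt_iff_frequently.mp hclus) _ hgood).and_eventually hfar
    |>.exists
  have hzS : z ∉ S := fun h => by linarith [hSR z h, hz.1]
  have hz1 : z ∈ ball (0 : ℂ) 1 := mem_ball_zero_iff.mpr hz.2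
  obtain ⟨T, hTcard, hT⟩ := hzw.2 fun h => hzS (hS.mem_toFinset.mpr ⟨hz1, h⟩)
  have hzT : z ∉ T := fun h => by
    obtain ⟨s, hs, hzs⟩ := (hT z h).2
    linarith [norm_le_norm_add_norm_sub' z s, hSR s hs, dist_eq_norm z s, hz.1]
  have hcard := (hval (f z) hzw.1).card_le hf isOpen_ball (convex_ball 0 1).isPreconnected
    (T := insert z T) fun x hx => by
      rcases Finset.mem_insert.mp hx with rfl | hx
      · exact ⟨hz1, rfl⟩
      · obtain ⟨s, hs, hxs⟩ := (hT x hx).2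
        refine ⟨mem_ball_zero_iff.mpr ?_, (hT x hx).1⟩
        linarith [norm_le_norm_add_norm_sub' x s, hSR s hs, dist_eq_norm x s]
  rw [Finset.card_insert_of_notMem hzT, hTcard, hsum'] at hcard
  omega

theorem tendsto_norm_of_hasValence (hf : AnalyticOnNhd ℂ f (ball 0 1))
    (hmaps : MapsTo f (ball 0 1) (ball 0 1))
    (hval : ∀ w ∈ ball (0 : ℂ) 1, HasValence f (ball 0 1) w n) :
    Tendsto (fun z => ‖f z‖) (comap norm (𝓝[<] 1)) (𝓝 1) := by
  rw [Metric.tendsto_nhds]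
  intro ε hε
  by_contra hne
  have hin : ∀ᶠ z : ℂ in comap norm (𝓝[<] 1), ‖z‖ < 1 :=
    tendsto_comap.eventually self_mem_nhdsWithin
  have hK : ∃ᶠ z in comap norm (𝓝[<] 1), f z ∈ closedBall (0 : ℂ) (1 - ε) := by
    refine ((not_eventually.mp hne).and_eventually hin).mono fun z ⟨hfar, hz⟩ => ?_
    have h1 := mem_ball_zero_iff.mp (hmaps (mem_ball_zero_iff.mpr hz))
    rw [Real.dist_eq, not_lt, abs_sub_comm, abs_of_pos (by linarith)] at hfar
    exact mem_closedBall_zero_iff.mpr (by linarith)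
  obtain ⟨w₀, hw₀, hclus⟩ := (isCompact_closedBall _ _).exists_mapClusterPt_of_frequently hK
  exact not_mapClusterPt_of_hasValence hf hval
    (mem_ball_zero_iff.mpr (by linarith [mem_closedBall_zero_iff.mp hw₀])) hclus

end Boundary

section Blaschke

open ComplexConjugate

variable {a z : ℂ}

theorem norm_one_sub_conj_mul_sq_sub_norm_sub_sq (a z : ℂ) :
    ‖1 - conj a * z‖ ^ 2 - ‖z - a‖ ^ 2 = (1 - ‖a‖ ^ 2) * (1 - ‖z‖ ^ 2) := by
  simp only [← normSq_eq_norm_sq]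
  have h : ((1 - conj a * z) * conj (1 - conj a * z) - (z - a) * conj (z - a) : ℂ) =
      (1 - a * conj a) * (1 - z * conj z) := by
    simp only [map_sub, map_mul, map_one, conj_conj]
    ring
  simp only [mul_conj] at h
  exact_mod_cast h

theorem one_sub_norm_le_norm_one_sub_conj_mul (hz : ‖z‖ ≤ 1) : 1 - ‖a‖ ≤ ‖1 - conj a * z‖ := by
  have h := norm_sub_norm_le (1 : ℂ) (conj a * z)
  rw [norm_one, norm_mul, norm_conj] at h
  nlinarith [norm_nonneg a]

theorem one_sub_norm_blaschkeFactor_sq (ha : ‖a‖ < 1) (hz : ‖z‖ ≤ 1) :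
    1 - ‖blaschkeFactor a z‖ ^ 2 = (1 - ‖a‖ ^ 2) * (1 - ‖z‖ ^ 2) / ‖1 - conj a * z‖ ^ 2 := by
  have hden : 0 < ‖1 - conj a * z‖ :=
    lt_of_lt_of_le (by linarith) (one_sub_norm_le_norm_one_sub_conj_mul hz)
  have hden' : ‖1 - conj a * z‖ ^ 2 ≠ 0 := by positivity
  rw [blaschkeFactor, norm_div, div_pow, ← norm_one_sub_conj_mul_sq_sub_norm_sub_sq,
    eq_div_iff hden', sub_mul, div_mul_cancel₀ _ hden', one_mul]

theorem norm_blaschkeFactor_le_one (ha : ‖a‖ < 1) (hz : ‖z‖ ≤ 1) : ‖blaschkeFactor a z‖ ≤ 1 := by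
  have h := one_sub_norm_blaschkeFactor_sq ha hz
  have : 0 ≤ (1 - ‖a‖ ^ 2) * (1 - ‖z‖ ^ 2) / ‖1 - conj a * z‖ ^ 2 := by
    apply div_nonneg _ (sq_nonneg _)
    apply mul_nonneg <;> nlinarith [norm_nonneg a, norm_nonneg z]
  nlinarith [norm_nonneg (blaschkeFactor a z)]

theorem tendsto_norm_blaschkeFactor (ha : ‖a‖ < 1) :
    Tendsto (fun z => ‖blaschkeFactor a z‖) (comap norm (𝓝[<] 1)) (𝓝 1) := by
  -- squeeze, using `1 - ‖b‖ ≤ 1 - ‖b‖ ^ 2 ≤ (1 - ‖z‖ ^ 2) / (1 - ‖a‖) ^ 2`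
  have hlow : Tendsto (fun z : ℂ => 1 - (1 - ‖z‖ ^ 2) / (1 - ‖a‖) ^ 2) (comap norm (𝓝[<] 1))
      (𝓝 1) := by
    have hcont : Continuous fun t : ℝ => 1 - (1 - t ^ 2) / (1 - ‖a‖) ^ 2 := by fun_prop
    have h1 : Tendsto (fun t : ℝ => 1 - (1 - t ^ 2) / (1 - ‖a‖) ^ 2) (𝓝[<] 1) (𝓝 1) := by
      simpa using (hcont.tendsto 1).mono_left nhdsWithin_le_nhds
    exact h1.comp tendsto_comap
  refine tendsto_of_tendsto_of_tendsto_of_le_of_le' hlow tendsto_const_nhds ?_ ?_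
  all_goals filter_upwards [tendsto_comap.eventually self_mem_nhdsWithin] with z hz
  · have hz' : ‖z‖ ≤ 1 := (mem_Iio.mp hz).le
    have h := one_sub_norm_blaschkeFactor_sq ha hz'
    have hb := norm_blaschkeFactor_le_one ha hz'
    have hden := one_sub_norm_le_norm_one_sub_conj_mul (a := a) hz'
    have hquot : (1 - ‖a‖ ^ 2) * (1 - ‖z‖ ^ 2) / ‖1 - conj a * z‖ ^ 2 ≤
        (1 - ‖z‖ ^ 2) / (1 - ‖a‖) ^ 2 := by
      have h1a : 0 < 1 - ‖a‖ := by linarith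
      have h1z : 0 ≤ 1 - ‖z‖ ^ 2 := by nlinarith [norm_nonneg z]
      rw [div_le_div_iff₀ (by nlinarith) (by positivity)]
      nlinarith [mul_le_mul_of_nonneg_left (pow_le_pow_left₀ h1a.le hden 2) h1z,
        mul_nonneg (mul_nonneg h1z (sq_nonneg (1 - ‖a‖))) (sq_nonneg ‖a‖)]
    nlinarith [norm_nonneg (blaschkeFactor a z)]
  · exact norm_blaschkeFactor_le_one ha (mem_Iio.mp hz).le

end Blaschke

/-- The maximum modulus principle, applied on circles close to the unit circle. -/
theorem norm_le_one_of_norm_mul_le_one {h k : ℂ → ℂ} (hh : DifferentiableOn ℂ h (ball 0 1))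
    (hk : Tendsto (fun z => ‖k z‖) (comap norm (𝓝[<] 1)) (𝓝 1))
    (hle : ∀ z ∈ ball (0 : ℂ) 1, ‖h z‖ * ‖k z‖ ≤ 1) {z : ℂ} (hz : z ∈ ball (0 : ℂ) 1) :
    ‖h z‖ ≤ 1 := by
  refine le_of_forall_gt_imp_ge_of_dense fun C hC => ?_
  have hev : ∀ᶠ x : ℂ in comap norm (𝓝[<] 1), ‖x‖ < 1 → ‖h x‖ ≤ C := by
    filter_upwards [hk.eventually (lt_mem_nhds (inv_lt_one_of_one_lt₀ hC))] with x hx hx1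
    have hCinv : C * C⁻¹ = 1 := mul_inv_cancel₀ (by linarith)
    nlinarith [hle x (mem_ball_zero_iff.mpr hx1), norm_nonneg (h x),
      inv_pos.mpr (by linarith : 0 < C)]
  obtain ⟨V, hV, hVsub⟩ := mem_comap.mp hev
  obtain ⟨r, hr, hrV⟩ := mem_nhdsLT_iff_exists_Ioo_subset.mp hV
  have hz1 := mem_ball_zero_iff.mp hz
  obtain ⟨r₂, hr₂⟩ := exists_between (max_lt (mem_Iio.mp hr) hz1)
  have hr₂0 : 0 < r₂ := by linarith [le_max_right r ‖z‖, norm_nonneg z]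
  have hclos : closure (ball (0 : ℂ) r₂) ⊆ ball 0 1 := by
    rw [closure_ball _ hr₂0.ne']
    exact closedBall_subset_ball hr₂.2
  refine Complex.norm_le_of_forall_mem_frontier_norm_le isBounded_ball
    (hh.mono hclos).diffContOnCl (fun x hx => ?_)
    (subset_closure (mem_ball_zero_iff.mpr (by linarith [le_max_right r ‖z‖])))
  rw [frontier_ball _ hr₂0.ne', mem_sphere_zero_iff_norm] at hx
  refine hVsub (hrV ⟨?_, ?_⟩) (by rw [hx]; exact hr₂.2)
  all_goals simp only [hx]; linarith [le_max_left r ‖z‖]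

theorem AnalyticOnNhd.exists_eq_prod_sub_mul {F : ℂ → ℂ} {U : Set ℂ} (hF : AnalyticOnNhd ℂ F U)
    (hU : IsOpen U) {Z : Multiset ℂ} (hZ : ∀ a ∈ Z, a ∈ U)
    (hord : ∀ z ∈ U, analyticOrderAt F z = Z.count z) :
    ∃ G : ℂ → ℂ, AnalyticOnNhd ℂ G U ∧ (∀ z ∈ U, G z ≠ 0) ∧
      ∀ z ∈ U, F z = (Z.map (z - ·)).prod * G z := by
  induction Z using Multiset.induction_on generalizing F with
  | empty =>
    refine ⟨F, hF, fun z hz => ?_, fun z _ => by simp⟩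
    have := hord z hz
    rw [Multiset.count_zero, Nat.cast_zero, analyticOrderAt_eq_zero] at this
    exact this.resolve_left (not_not.mpr (hF z hz))
  | cons a Z ih =>
    have ha : a ∈ U := hZ a (Multiset.mem_cons_self a Z)
    have hFa : F a = 0 := apply_eq_zero_of_analyticOrderAt_ne_zero (by simp [hord a ha])
    have hF₁ : AnalyticOnNhd ℂ (dslope F a) U :=
      ((differentiableOn_dslope (hU.mem_nhds ha)).mpr hF.differentiableOn).analyticOnNhd hU
    have hFF₁ : F = fun z => (z - a) * dslope F a z := funext fun z => by
      rw [← smul_eq_mul, sub_smul_dslope, hFa, sub_zero]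
    have hord₁ : ∀ z ∈ U, analyticOrderAt (dslope F a) z = Z.count z := fun z hz => by
      have h := hord z hz
      rw [hFF₁, show (fun z => (z - a) * dslope F a z) = (· - a) * dslope F a from rfl,
        analyticOrderAt_mul (by fun_prop) (hF₁ z hz), Multiset.count_cons] at h
      by_cases hza : z = a
      · subst hza
        rw [analyticOrderAt_id_sub_const_self, if_pos rfl, Nat.cast_add, Nat.cast_one,
          add_comm] at h
        exact WithTop.add_right_cancel ENat.one_ne_top h
      · rwa [analyticOrderAt_id_sub_const_of_ne hza, if_neg hza, zero_add, add_zero] at h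
    obtain ⟨G, hG, hG0, hFG⟩ :=
      ih hF₁ (fun b hb => hZ b (Multiset.mem_cons_of_mem hb)) hord₁
    refine ⟨G, hG, hG0, fun z hz => ?_⟩
    rw [Multiset.map_cons, Multiset.prod_cons, mul_assoc, ← hFG z hz]
    exact congrFun hFF₁ z

theorem Multiset.exists_univ_map_eq {α : Type*} (Z : Multiset α) :
    ∃ a : Fin (Multiset.card Z) → α, Finset.univ.val.map a = Z := by
  refine ⟨fun i => Z.toList.get (i.cast (Multiset.length_toList Z).symm), ?_⟩
  rw [Fin.univ_val_map, ← List.ofFn_congr (Multiset.length_toList Z), List.ofFn_get,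
    Multiset.coe_toList]

section Assembly

open ComplexConjugate

variable {f : ℂ → ℂ} {n : ℕ} {a : Fin n → ℂ}

theorem exists_eq_prod_blaschkeFactor_mul {G : ℂ → ℂ} (ha : ∀ i, a i ∈ ball (0 : ℂ) 1)
    (hG : AnalyticOnNhd ℂ G (ball 0 1)) (hG0 : ∀ z ∈ ball (0 : ℂ) 1, G z ≠ 0)
    (hfG : ∀ z ∈ ball (0 : ℂ) 1, f z = (∏ i, (z - a i)) * G z) :
    ∃ g : ℂ → ℂ, DifferentiableOn ℂ g (ball 0 1) ∧ (∀ z ∈ ball (0 : ℂ) 1, g z ≠ 0) ∧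
      ∀ z ∈ ball (0 : ℂ) 1, f z = (∏ i, blaschkeFactor (a i) z) * g z := by
  have hden : ∀ z ∈ ball (0 : ℂ) 1, ∀ i, 1 - conj (a i) * z ≠ 0 := fun z hz i h => by
    have := one_sub_norm_le_norm_one_sub_conj_mul (a := a i) (mem_ball_zero_iff.mp hz).le
    rw [h, norm_zero] at this
    linarith [mem_ball_zero_iff.mp (ha i)]
  refine ⟨fun z => (∏ i, (1 - conj (a i) * z)) * G z, ?_, fun z hz => ?_, fun z hz => ?_⟩
  · exact (Differentiable.differentiableOn (by fun_prop)).mul hG.differentiableOn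
  · exact mul_ne_zero (Finset.prod_ne_zero_iff.mpr fun i _ => hden z hz i) (hG0 z hz)
  · rw [hfG z hz, ← mul_assoc, ← Finset.prod_mul_distrib]
    congr 1
    exact Finset.prod_congr rfl fun i _ => (div_mul_cancel₀ _ (hden z hz i)).symm

theorem isFiniteBlaschkeDeg_of_eq_prod_blaschkeFactor_mul {g : ℂ → ℂ}
    (ha : ∀ i, a i ∈ ball (0 : ℂ) 1) (hg : DifferentiableOn ℂ g (ball 0 1))
    (hg0 : ∀ z ∈ ball (0 : ℂ) 1, g z ≠ 0)
    (hfB : ∀ z ∈ ball (0 : ℂ) 1, f z = (∏ i, blaschkeFactor (a i) z) * g z)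
    (hmaps : MapsTo f (ball 0 1) (ball 0 1))
    (hlim : Tendsto (fun z => ‖f z‖) (comap norm (𝓝[<] 1)) (𝓝 1)) :
    IsFiniteBlaschkeDeg n f := by
  have ha' : ∀ i, ‖a i‖ < 1 := fun i => mem_ball_zero_iff.mp (ha i)
  have hB1 : ∀ z ∈ ball (0 : ℂ) 1, ‖∏ i, blaschkeFactor (a i) z‖ ≤ 1 := fun z hz => by
    rw [norm_prod]
    exact Finset.prod_le_one (fun _ _ => norm_nonneg _)
      fun i _ => norm_blaschkeFactor_le_one (ha' i) (mem_ball_zero_iff.mp hz).le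
  have hBlim : Tendsto (fun z => ‖∏ i, blaschkeFactor (a i) z‖) (comap norm (𝓝[<] 1)) (𝓝 1) := by
    simpa only [norm_prod, Finset.prod_const_one] using
      tendsto_finsetProd Finset.univ fun i _ => tendsto_norm_blaschkeFactor (ha' i)
  have hgle : ∀ z ∈ ball (0 : ℂ) 1, ‖g z‖ ≤ 1 := fun z hz =>
    norm_le_one_of_norm_mul_le_one hg hBlim (fun x hx => by
      rw [mul_comm, ← norm_mul, ← hfB x hx]
      exact (mem_ball_zero_iff.mp (hmaps hx)).le) hz
  have hgge : ∀ z ∈ ball (0 : ℂ) 1, ‖(g z)⁻¹‖ ≤ 1 := fun z hz =>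
    norm_le_one_of_norm_mul_le_one (h := fun z => (g z)⁻¹) (hg.inv hg0) hlim (fun x hx => by
      rw [← norm_mul, hfB x hx, mul_comm, mul_assoc, mul_inv_cancel₀ (hg0 x hx), mul_one]
      exact hB1 x hx) hz
  have hg1 : ∀ z ∈ ball (0 : ℂ) 1, ‖g z‖ = 1 := fun z hz =>
    le_antisymm (hgle z hz) (by
      have := hgge z hz
      rwa [norm_inv, inv_le_one₀ (norm_pos_iff.mpr (hg0 z hz))] at this)
  have h0 : (0 : ℂ) ∈ ball (0 : ℂ) 1 := mem_ball_self one_pos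
  have hconst := Complex.eqOn_of_isPreconnected_of_isMaxOn_norm
    (convex_ball (0 : ℂ) 1).isPreconnected isOpen_ball hg h0
    fun z hz => by simp [hg1 z hz, hg1 0 h0]
  exact ⟨g 0, a, hg1 0 h0, ha, fun z hz => by
    rw [hfB z hz, hconst hz, Function.const_apply, mul_comm]⟩

end Assembly

theorem stmt_1_general (f : ℂ → ℂ) (hf : DifferentiableOn ℂ f (ball (0:ℂ) 1))
    (hmaps : Set.MapsTo f (ball (0:ℂ) 1) (ball (0:ℂ) 1)) (n : ℕ)
    (hval : ∀ w ∈ ball (0:ℂ) 1, HasValence f (ball (0:ℂ) 1) w n) :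
    IsFiniteBlaschkeDeg n f := by
  have hA : AnalyticOnNhd ℂ f (ball 0 1) := hf.analyticOnNhd isOpen_ball
  have hconn : IsPreconnected (ball (0 : ℂ) 1) := (convex_ball 0 1).isPreconnected
  obtain ⟨Z, rfl, hZ, hord⟩ := (hval 0 (mem_ball_self one_pos)).exists_multiset_analyticOrderAt_eq
    hA isOpen_ball hconn
  obtain ⟨G, hG, hG0, hfG⟩ := hA.exists_eq_prod_sub_mul isOpen_ball hZ hord
  obtain ⟨a, haZ⟩ := Z.exists_univ_map_eq
  rw [← haZ] at hZ hfG
  have ha : ∀ i, a i ∈ ball (0 : ℂ) 1 := fun i =>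
    hZ _ (Multiset.mem_map_of_mem a (Finset.mem_univ_val i))
  obtain ⟨g, hg, hg0, hfB⟩ := exists_eq_prod_blaschkeFactor_mul (f := f) ha hG hG0 fun z hz => by
    rw [hfG z hz, Multiset.map_map, Finset.prod_map_val, Function.comp_def]
  exact isFiniteBlaschkeDeg_of_eq_prod_blaschkeFactor_mul ha hg hg0 hfB hmaps
    (tendsto_norm_of_hasValence hA hmaps hval)

theorem stmt_1 (f : ℂ → ℂ) (hf : DifferentiableOn ℂ f (ball (0:ℂ) 1))
    (hmaps : Set.MapsTo f (ball (0:ℂ) 1) (ball (0:ℂ) 1)) (n : ℕ) (hn : 0 < n)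
    (hval : ∀ w ∈ ball (0:ℂ) 1, HasValence f (ball (0:ℂ) 1) w n) :
    IsFiniteBlaschkeDeg n f :=
  stmt_1_general f hf hmaps n hval
end

section
/- If f is a finite Blaschke product on 𝔻 and f'(z) ≠ 0 for all z ∈ 𝔻, then f is a disc automorphism, i.e., f(z) = λ(z - α)/(1 - conj(α) z) for some α ∈ 𝔻 and some λ with |λ| = 1. -/
open Complex Metric MeasureTheory Set Filter

/-!
Write `B = λ P / Q` with `P = ∏ (z - aᵢ)` and `Q = ∏ (1 - conj aᵢ z)`, so that `B' = λ R / Q²`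
with `R = P' Q - P Q'` a polynomial of degree at most `2n - 2`. The zeros of `R` are symmetric
under `z ↦ 1 / conj z`, and on the unit circle `R(z) = z^(n-1) · (positive real)`. Hence if `B'`
has no zeros in the disc, `R` has no zeros at all, so it is a nonzero constant; the reflection
symmetry `R(z) = z^(2n-2) conj R(1 / conj z)` then forces `2n - 2 = 0`.
-/

open Polynomial Finset ComplexConjugate

namespace Blaschke

variable {n : ℕ} (a : Fin n → ℂ)

noncomputable def derivNumerator : ℂ[X] :=
  ∑ k, C (1 - conj (a k) * a k) * ∏ j ∈ univ.erase k, ((X - C (a j)) * (1 - C (conj (a j)) * X))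

lemma eval_derivNumerator (z : ℂ) :
    (derivNumerator a).eval z = ∑ k, (1 - conj (a k) * a k) *
      ∏ j ∈ univ.erase k, ((z - a j) * (1 - conj (a j) * z)) := by
  simp [derivNumerator, eval_finsetSum, eval_prod]

lemma eval_derivNumerator_eq_quotient_rule (z : ℂ) :
    (derivNumerator a).eval z =
      (∑ k, ∏ j ∈ univ.erase k, (z - a j)) * ∏ i, (1 - conj (a i) * z)
        - (∏ i, (z - a i)) * ∑ k, (∏ j ∈ univ.erase k, (1 - conj (a j) * z)) * -conj (a k) := by
  rw [eval_derivNumerator, sum_mul, mul_sum, ← sum_sub_distrib]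
  refine sum_congr rfl fun k _ => ?_
  rw [← mul_prod_erase _ (fun i => z - a i) (mem_univ k),
    ← mul_prod_erase _ (fun i => 1 - conj (a i) * z) (mem_univ k), prod_mul_distrib]
  ring

lemma eval_derivNumerator_eq_pow_mul_conj {z : ℂ} (hz : z ≠ 0) :
    (derivNumerator a).eval z = z ^ (2 * n - 2) * conj ((derivNumerator a).eval (conj z)⁻¹) := by
  rcases n.eq_zero_or_pos with rfl | hn
  · simp [eval_derivNumerator]
  rw [eval_derivNumerator, eval_derivNumerator, map_sum, mul_sum]
  refine sum_congr rfl fun k _ => ?_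
  have hpow : z ^ (2 * n - 2) = ∏ j ∈ univ.erase k, z ^ 2 := by
    rw [prod_const, card_erase_of_mem (mem_univ k), card_univ, Fintype.card_fin, ← pow_mul]
    congr 1
    omega
  have hfactor : ∀ j, (z - a j) * (1 - conj (a j) * z)
      = z ^ 2 * ((z⁻¹ - conj (a j)) * (1 - a j * z⁻¹)) := by
    intro j
    field_simp
  simp only [map_mul, map_prod, map_sub, map_one, map_inv₀, conj_conj]
  rw [prod_congr rfl fun j _ => hfactor j, prod_mul_distrib, ← hpow]
  ring

lemma mul_one_sub_conj_mul_of_norm_eq_one {z : ℂ} (hz : ‖z‖ = 1) (b : ℂ) :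
    (z - b) * (1 - conj b * z) = z * (normSq (z - b) : ℂ) := by
  have hzz : z * conj z = 1 := by
    rw [mul_conj, normSq_eq_norm_sq, hz]
    norm_num
  rw [← mul_conj, map_sub]
  linear_combination (b - z) * hzz

lemma eval_derivNumerator_ne_zero_of_norm_eq_one (hn : 0 < n) (ha : ∀ i, ‖a i‖ < 1)
    {z : ℂ} (hz : ‖z‖ = 1) : (derivNumerator a).eval z ≠ 0 := by
  have hterm : ∀ k, (1 - conj (a k) * a k) *
      ∏ j ∈ univ.erase k, ((z - a j) * (1 - conj (a j) * z))
      = z ^ (n - 1) * (((1 - normSq (a k)) * ∏ j ∈ univ.erase k, normSq (z - a j) : ℝ) : ℂ) := by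
    intro k
    rw [prod_congr rfl fun j _ => mul_one_sub_conj_mul_of_norm_eq_one hz (a j),
      prod_mul_distrib, prod_const, card_erase_of_mem (mem_univ k), card_univ,
      Fintype.card_fin]
    push_cast
    rw [normSq_eq_conj_mul_self]
    ring
  have hpos : 0 < ∑ k, (1 - normSq (a k)) * ∏ j ∈ univ.erase k, normSq (z - a j) := by
    have : Nonempty (Fin n) := Fin.pos_iff_nonempty.mp hn
    refine sum_pos (fun k _ => mul_pos ?_ (prod_pos fun j _ => normSq_pos.mpr ?_)) univ_nonempty
    · rw [normSq_eq_norm_sq]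
      nlinarith [ha k, norm_nonneg (a k)]
    · rintro h
      exact (ha j).ne (sub_eq_zero.mp h ▸ hz)
  rw [eval_derivNumerator, sum_congr rfl fun k _ => hterm k, ← mul_sum, ← ofReal_sum]
  have hz0 : z ≠ 0 := norm_ne_zero_iff.mp (hz ▸ one_ne_zero)
  exact mul_ne_zero (pow_ne_zero _ hz0) (ofReal_ne_zero.mpr hpos.ne')

lemma prod_one_sub_conj_mul_ne_zero (ha : ∀ i, ‖a i‖ < 1) {z : ℂ} (hz : ‖z‖ ≤ 1) :
    ∏ i, (1 - conj (a i) * z) ≠ 0 := by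
  refine prod_ne_zero_iff.mpr fun i _ h => ?_
  have h1 : ‖conj (a i) * z‖ = 1 := by rw [← sub_eq_zero.mp h, norm_one]
  rw [norm_mul, norm_conj] at h1
  nlinarith [ha i, norm_nonneg (a i), norm_nonneg z]

lemma hasDerivAt_prod_blaschkeFactor {z : ℂ} (hQ : ∏ i, (1 - conj (a i) * z) ≠ 0) :
    HasDerivAt (fun w => ∏ i, blaschkeFactor (a i) w)
      ((derivNumerator a).eval z / (∏ i, (1 - conj (a i) * z)) ^ 2) z := by
  have hP : HasDerivAt (fun w => ∏ i, (w - a i)) (∑ k, ∏ j ∈ univ.erase k, (z - a j)) z := by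
    simpa using HasDerivAt.fun_finsetProd (u := univ) (f := fun i w => w - a i)
      (fun i _ => (hasDerivAt_id z).sub_const (a i))
  have hQ' : HasDerivAt (fun w => ∏ i, (1 - conj (a i) * w))
      (∑ k, (∏ j ∈ univ.erase k, (1 - conj (a j) * z)) * -conj (a k)) z := by
    simpa using HasDerivAt.fun_finsetProd (u := univ) (f := fun i w => 1 - conj (a i) * w)
      (fun i _ => ((hasDerivAt_id z).const_mul (conj (a i))).const_sub 1)
  rw [eval_derivNumerator_eq_quotient_rule]
  simpa only [blaschkeFactor, prod_div_distrib] using hP.fun_div hQ' hQ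

lemma eval_derivNumerator_ne_zero (hn : 0 < n) (ha : ∀ i, ‖a i‖ < 1)
    (hdisc : ∀ z ∈ ball (0 : ℂ) 1, (derivNumerator a).eval z ≠ 0) (z : ℂ) :
    (derivNumerator a).eval z ≠ 0 := by
  rcases lt_trichotomy ‖z‖ 1 with h | h | h
  · exact hdisc z (mem_ball_zero_iff.mpr h)
  · exact eval_derivNumerator_ne_zero_of_norm_eq_one a hn ha h
  · have hz0 : z ≠ 0 := norm_pos_iff.mp (one_pos.trans h)
    have hw : (conj z)⁻¹ ∈ ball (0 : ℂ) 1 := by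
      rw [mem_ball_zero_iff, norm_inv, norm_conj]
      exact inv_lt_one_of_one_lt₀ h
    rw [eval_derivNumerator_eq_pow_mul_conj a hz0]
    exact mul_ne_zero (pow_ne_zero _ hz0) ((_root_.map_ne_zero _).mpr (hdisc _ hw))

lemma eq_one_of_eval_derivNumerator_ne_zero (hn : 0 < n) (ha : ∀ i, ‖a i‖ < 1)
    (hdisc : ∀ z ∈ ball (0 : ℂ) 1, (derivNumerator a).eval z ≠ 0) : n = 1 := by
  have hR := eval_derivNumerator_ne_zero a hn ha hdisc
  obtain ⟨c, hc⟩ : ∃ c, derivNumerator a = C c := by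
    refine ⟨_, eq_C_of_degree_le_zero (not_lt.mp fun hdeg => ?_)⟩
    obtain ⟨z, hz⟩ := exists_root hdeg
    exact hR z hz
  have hc0 : c ≠ 0 := by simpa [hc] using hR 0
  have hrefl := congrArg (‖·‖) (eval_derivNumerator_eq_pow_mul_conj a (two_ne_zero (α := ℂ)))
  simp only [hc, eval_C, norm_mul, norm_pow, norm_conj, Complex.norm_two] at hrefl
  have hpow : (2 : ℝ) ^ (2 * n - 2) = 1 :=
    (mul_eq_right₀ (norm_ne_zero_iff.mpr hc0)).mp hrefl.symm
  by_contra hne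
  exact (one_lt_pow₀ one_lt_two (by omega : 2 * n - 2 ≠ 0)).ne' hpow

end Blaschke

open Blaschke in
theorem stmt_3 (f : ℂ → ℂ) (hf : IsFiniteBlaschke f)
    (hder : ∀ z ∈ ball (0:ℂ) 1, deriv f z ≠ 0) :
    ∃ α ∈ ball (0:ℂ) 1, ∃ lam : ℂ, ‖lam‖ = 1 ∧
      ∀ z ∈ ball (0:ℂ) 1, f z = lam * ((z - α) / (1 - (starRingEnd ℂ) α * z)) := by
  obtain ⟨n, hn, lam, a, hlam, ha, hfe⟩ := hf
  have ha' : ∀ i, ‖a i‖ < 1 := fun i => mem_ball_zero_iff.mp (ha i)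
  have hdisc : ∀ z ∈ ball (0 : ℂ) 1, (derivNumerator a).eval z ≠ 0 := by
    intro z hz hR
    have hQ := prod_one_sub_conj_mul_ne_zero a ha' (mem_ball_zero_iff.mp hz).le
    have hf' : HasDerivAt f (lam * ((derivNumerator a).eval z / _)) z :=
      ((hasDerivAt_prod_blaschkeFactor a hQ).const_mul lam).congr_of_eventuallyEq
        (eventually_of_mem (isOpen_ball.mem_nhds hz) hfe)
    exact hder z hz (by rw [hf'.deriv, hR, zero_div, mul_zero])
  obtain rfl := eq_one_of_eval_derivNumerator_ne_zero a hn ha' hdisc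
  refine ⟨a 0, ha 0, lam, hlam, fun z hz => ?_⟩
  rw [hfe z hz, Fin.prod_univ_one, blaschkeFactor]
end

section
/- There exists a holomorphic function f : 𝔻 → 𝔻 with f'(z) ≠ 0 for all z ∈ 𝔻, bounded valence (some N bounds the number of preimages of every point), and meas(𝔻 \ f(𝔻)) = 0, such that f is neither injective nor surjective onto 𝔻. -/
/-!
The map `z ↦ (1 + z) / (1 - z)` sends the disc onto the right half-plane, multiplication by `I`
turns it onto the upper half-plane, the principal square root sends that onto the first quadrant,
and `s ↦ (s - 1) / (s + 1)` maps the quadrant onto the upper half-disc `U`. The composite `g` is a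
Riemann map onto `U`; take `f = g ^ 4`. Since `U` is a half-disc, `v ↦ v ^ 4` maps it onto the
punctured disc, and does so at most four-to-one but not injectively (`v` and `I * v` can both lie
in `U`). So `f` omits only `0`, has valence at most `4`, and is not injective; `f' ≠ 0` by the chain
rule.
-/

open Complex Metric MeasureTheory Set Filter

noncomputable def toRightHalfPlane (z : ℂ) : ℂ := (1 + z) / (1 - z)

noncomputable def ofRightHalfPlane (s : ℂ) : ℂ := (s - 1) / (s + 1)

section Mobius

variable {z s : ℂ}

lemma ne_neg_one_of_re_pos (hs : 0 < s.re) : s ≠ -1 := by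
  rintro rfl; norm_num at hs

lemma re_toRightHalfPlane_pos (hz : ‖z‖ < 1) : 0 < (toRightHalfPlane z).re := by
  have hz1 : 1 - z ≠ 0 := fun h => by simp [← sub_eq_zero.1 h] at hz
  have hz2 : normSq z < 1 := by rw [normSq_eq_norm_sq]; nlinarith [norm_nonneg z]
  rw [normSq_apply] at hz2
  rw [toRightHalfPlane, div_re, ← add_div]
  refine div_pos ?_ (normSq_pos.2 hz1)
  simp only [add_re, sub_re, one_re, add_im, sub_im, one_im]
  nlinarith

lemma im_toRightHalfPlane_pos (hz : 0 < z.im) : 0 < (toRightHalfPlane z).im := by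
  have hz1 : 1 - z ≠ 0 := fun h => by simp [← sub_eq_zero.1 h] at hz
  rw [toRightHalfPlane, div_im, ← sub_div]
  refine div_pos ?_ (normSq_pos.2 hz1)
  simp only [add_re, sub_re, one_re, add_im, sub_im, one_im]
  nlinarith

lemma im_ofRightHalfPlane_pos (hs : 0 < s.im) : 0 < (ofRightHalfPlane s).im := by
  have hs1 : s + 1 ≠ 0 := fun h => by simp [eq_neg_of_add_eq_zero_left h] at hs
  rw [ofRightHalfPlane, div_im, ← sub_div]
  refine div_pos ?_ (normSq_pos.2 hs1)
  simp only [add_re, sub_re, one_re, add_im, sub_im, one_im]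
  nlinarith

lemma norm_ofRightHalfPlane_lt_one (hs : 0 < s.re) : ‖ofRightHalfPlane s‖ < 1 := by
  have hs1 : s + 1 ≠ 0 := fun h => ne_neg_one_of_re_pos hs (eq_neg_of_add_eq_zero_left h)
  rw [ofRightHalfPlane, norm_div, div_lt_one (norm_pos_iff.2 hs1), ← sq_lt_sq₀ (norm_nonneg _)
    (norm_nonneg _), ← normSq_eq_norm_sq, ← normSq_eq_norm_sq, normSq_apply, normSq_apply]
  simp only [add_re, sub_re, one_re, add_im, sub_im, one_im]
  nlinarith

lemma ofRightHalfPlane_toRightHalfPlane (hz : z ≠ 1) :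
    ofRightHalfPlane (toRightHalfPlane z) = z := by
  have : 1 - z ≠ 0 := sub_ne_zero.2 hz.symm
  rw [ofRightHalfPlane, toRightHalfPlane]
  field_simp
  ring

lemma toRightHalfPlane_ofRightHalfPlane (hs : s ≠ -1) :
    toRightHalfPlane (ofRightHalfPlane s) = s := by
  have : s + 1 ≠ 0 := fun h => hs (eq_neg_of_add_eq_zero_left h)
  rw [ofRightHalfPlane, toRightHalfPlane]
  field_simp
  ring

lemma hasDerivAt_toRightHalfPlane (hz : z ≠ 1) :
    HasDerivAt toRightHalfPlane (2 / (1 - z) ^ 2) z := by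
  have : 1 - z ≠ 0 := sub_ne_zero.2 hz.symm
  exact (((hasDerivAt_id' z).const_add 1).div ((hasDerivAt_id' z).const_sub 1) this).congr_deriv
    (by ring)

lemma hasDerivAt_ofRightHalfPlane (hs : s ≠ -1) :
    HasDerivAt ofRightHalfPlane (2 / (s + 1) ^ 2) s := by
  have : s + 1 ≠ 0 := fun h => hs (eq_neg_of_add_eq_zero_left h)
  exact (((hasDerivAt_id' s).sub_const 1).div ((hasDerivAt_id' s).add_const 1) this).congr_deriv
    (by ring)

end Mobius

lemma re_cpow_inv_two_pos {w : ℂ} (hw : w ∈ slitPlane) : 0 < (w ^ (2⁻¹ : ℂ)).re := by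
  rw [cpow_inv_two_re, Real.sqrt_pos]
  rcases mem_slitPlane_iff.1 hw with hre | him
  · linarith [norm_nonneg w]
  · linarith [abs_re_lt_norm.2 him, neg_abs_le w.re]

lemma im_cpow_inv_two_pos {w : ℂ} (hw : 0 < w.im) : 0 < (w ^ (2⁻¹ : ℂ)).im := by
  rw [cpow_inv_two_im_eq_sqrt hw.le, Real.sqrt_pos]
  linarith [abs_re_lt_norm.2 hw.ne', le_abs_self w.re]

def upperHalfDisc : Set ℂ := ball 0 1 ∩ {v | 0 < v.im}

noncomputable def upperHalfDiscMap (z : ℂ) : ℂ :=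
  ofRightHalfPlane ((I * toRightHalfPlane z) ^ (2⁻¹ : ℂ))

section upperHalfDiscMap

variable {z : ℂ}

lemma ne_one_of_mem_ball (hz : z ∈ ball (0 : ℂ) 1) : z ≠ 1 :=
  ne_of_mem_of_not_mem hz (by simp)

lemma im_I_mul_toRightHalfPlane_pos (hz : z ∈ ball (0 : ℂ) 1) :
    0 < (I * toRightHalfPlane z).im := by
  simpa using re_toRightHalfPlane_pos (mem_ball_zero_iff.1 hz)

lemma re_sqrt_I_mul_toRightHalfPlane_pos (hz : z ∈ ball (0 : ℂ) 1) :
    0 < ((I * toRightHalfPlane z) ^ (2⁻¹ : ℂ)).re :=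
  re_cpow_inv_two_pos (mem_slitPlane_iff.2 (Or.inr (im_I_mul_toRightHalfPlane_pos hz).ne'))

lemma upperHalfDiscMap_mem (hz : z ∈ ball (0 : ℂ) 1) : upperHalfDiscMap z ∈ upperHalfDisc :=
  ⟨mem_ball_zero_iff.2 (norm_ofRightHalfPlane_lt_one (re_sqrt_I_mul_toRightHalfPlane_pos hz)),
    im_ofRightHalfPlane_pos (im_cpow_inv_two_pos (im_I_mul_toRightHalfPlane_pos hz))⟩

lemma toRightHalfPlane_upperHalfDiscMap_sq (hz : z ∈ ball (0 : ℂ) 1) :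
    toRightHalfPlane (upperHalfDiscMap z) ^ 2 = I * toRightHalfPlane z := by
  rw [upperHalfDiscMap, toRightHalfPlane_ofRightHalfPlane
    (ne_neg_one_of_re_pos (re_sqrt_I_mul_toRightHalfPlane_pos hz)), cpow_ofNat_inv_pow]

lemma injOn_upperHalfDiscMap : InjOn upperHalfDiscMap (ball 0 1) := by
  intro z₁ hz₁ z₂ hz₂ h
  have h' := congrArg (fun v => toRightHalfPlane v ^ 2) h
  simp only [toRightHalfPlane_upperHalfDiscMap_sq hz₁, toRightHalfPlane_upperHalfDiscMap_sq hz₂,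
    mul_right_inj' I_ne_zero] at h'
  rw [← ofRightHalfPlane_toRightHalfPlane (ne_one_of_mem_ball hz₁), h',
    ofRightHalfPlane_toRightHalfPlane (ne_one_of_mem_ball hz₂)]

lemma image_upperHalfDiscMap : upperHalfDiscMap '' ball 0 1 = upperHalfDisc := by
  refine (mapsTo_iff_image_subset.1 fun z hz => upperHalfDiscMap_mem hz).antisymm ?_
  rintro v ⟨hv, hv_im⟩
  rw [mem_ball_zero_iff] at hv
  set s := toRightHalfPlane v
  have hs_re : 0 < s.re := re_toRightHalfPlane_pos hv
  have hs_im : 0 < s.im := im_toRightHalfPlane_pos hv_im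
  have hw : 0 < (-I * s ^ 2).re := by
    rw [neg_mul, neg_re, I_mul_re, neg_neg, sq, mul_im]; positivity
  refine ⟨ofRightHalfPlane (-I * s ^ 2), mem_ball_zero_iff.2 (norm_ofRightHalfPlane_lt_one hw), ?_⟩
  show upperHalfDiscMap _ = v
  rw [upperHalfDiscMap, toRightHalfPlane_ofRightHalfPlane (ne_neg_one_of_re_pos hw),
    ← mul_assoc, mul_neg, I_mul_I, neg_neg, one_mul, sq_cpow_two_inv hs_re,
    ofRightHalfPlane_toRightHalfPlane (ne_one_of_mem_ball (mem_ball_zero_iff.2 hv))]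

lemma exists_hasDerivAt_upperHalfDiscMap_ne_zero (hz : z ∈ ball (0 : ℂ) 1) :
    ∃ d ≠ 0, HasDerivAt upperHalfDiscMap d z := by
  have hw := im_I_mul_toRightHalfPlane_pos hz
  have hs := ne_neg_one_of_re_pos (re_sqrt_I_mul_toRightHalfPlane_pos hz)
  have hz1 := ne_one_of_mem_ball hz
  have hw0 : I * toRightHalfPlane z ≠ 0 := fun h => by simp [h] at hw
  refine ⟨_, ?_, (hasDerivAt_ofRightHalfPlane hs).comp z
    (((hasDerivAt_toRightHalfPlane hz1).const_mul I).cpow_const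
      (mem_slitPlane_iff.2 (Or.inr hw.ne')))⟩
  simp [hw0, sub_eq_zero, hz1.symm, add_eq_zero_iff_eq_neg, hs]

end upperHalfDiscMap

lemma exists_im_I_pow_mul_pos {r : ℂ} (hr : r ≠ 0) : ∃ j : ℕ, 0 < (I ^ j * r).im := by
  by_contra! h
  have h0 := h 0
  have h1 := h 1
  have h2 := h 2
  have h3 := h 3
  simp only [pow_zero, one_mul, I_mul_im, neg_im, pow_succ, I_mul_I, neg_mul] at h0 h1 h2 h3
  exact hr (Complex.ext (by rw [zero_re]; linarith) (by rw [zero_im]; linarith))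

lemma image_pow_four_upperHalfDisc : (· ^ 4) '' upperHalfDisc = ball (0 : ℂ) 1 \ {0} := by
  apply Subset.antisymm
  · rintro _ ⟨v, ⟨hv, hv_im⟩, rfl⟩
    have hv0 : v ≠ 0 := fun h => by simp [h] at hv_im
    rw [mem_ball_zero_iff] at hv
    refine ⟨mem_ball_zero_iff.2 ?_, pow_ne_zero 4 hv0⟩
    rw [norm_pow]
    exact pow_lt_one₀ (norm_nonneg v) hv (by norm_num)
  · rintro w ⟨hw, hw0⟩
    set r := w ^ (4⁻¹ : ℂ)
    have hr : r ^ 4 = w := cpow_ofNat_inv_pow w 4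
    have hr0 : r ≠ 0 := fun h => hw0 (by rw [← hr, h]; simp)
    obtain ⟨j, hj⟩ := exists_im_I_pow_mul_pos hr0
    refine ⟨I ^ j * r, ⟨mem_ball_zero_iff.2 ?_, hj⟩, show (I ^ j * r) ^ 4 = w from ?_⟩
    · rw [mem_ball_zero_iff, ← hr, norm_pow] at hw
      simpa using (pow_lt_one_iff_of_nonneg (norm_nonneg r) (by norm_num)).1 hw
    · rw [mul_pow, ← pow_mul, mul_comm j, pow_mul, I_pow_four, one_pow, one_mul, hr]

lemma not_injOn_pow_four_upperHalfDisc : ¬ InjOn (· ^ 4 : ℂ → ℂ) upperHalfDisc := by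
  set v : ℂ := (1 + I) / 2
  have hv_norm : ‖v‖ < 1 := by
    rw [← sq_lt_one_iff₀ (norm_nonneg _), ← normSq_eq_norm_sq]
    norm_num [v, normSq_apply]
  have hv : v ∈ upperHalfDisc := ⟨mem_ball_zero_iff.2 hv_norm, by norm_num [v]⟩
  have hIv : I * v ∈ upperHalfDisc :=
    ⟨mem_ball_zero_iff.2 (by rwa [norm_mul, norm_I, one_mul]), by norm_num [v]⟩
  intro h
  have := congrArg re (h hv hIv (by simp [mul_pow, I_pow_four]))
  norm_num [v] at this

lemma Set.InjOn.finite_and_ncard_le_of_pow_eq {R α : Type*} [CommRing R] [IsDomain R] {g : α → R}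
    {s : Set α} (hg : InjOn g s) {n : ℕ} (hn : 0 < n) (a : R) :
    {z ∈ s | g z ^ n = a}.Finite ∧ {z ∈ s | g z ^ n = a}.ncard ≤ n := by
  have hmaps : MapsTo g {z ∈ s | g z ^ n = a} (Polynomial.nthRootsFinset n a) :=
    fun z hz => (Polynomial.mem_nthRootsFinset hn a).2 hz.2
  have hinj : InjOn g {z ∈ s | g z ^ n = a} := hg.mono (sep_subset _ _)
  refine ⟨Finite.of_finite_image ((Finset.finite_toSet _).subset hmaps.image_subset) hinj, ?_⟩
  calc {z ∈ s | g z ^ n = a}.ncard ≤ (Polynomial.nthRootsFinset n a : Set R).ncard :=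
        ncard_le_ncard_of_injOn g hmaps hinj (Finset.finite_toSet _)
    _ ≤ n := by
        classical
        rw [ncard_coe_finset, Polynomial.nthRootsFinset_def]
        exact (Multiset.toFinset_card_le _).trans (Polynomial.card_nthRoots n a)

lemma deriv_pow_ne_zero {g : ℂ → ℂ} {z d : ℂ} (hg : HasDerivAt g d z) (hd : d ≠ 0) (hgz : g z ≠ 0)
    {n : ℕ} (hn : n ≠ 0) : deriv (fun z => g z ^ n) z ≠ 0 := by
  rw [(hg.fun_pow n).deriv]
  simp [hn, hgz, hd]

theorem stmt_9 :
    ∃ f : ℂ → ℂ, DifferentiableOn ℂ f (ball (0:ℂ) 1) ∧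
      Set.MapsTo f (ball (0:ℂ) 1) (ball (0:ℂ) 1) ∧
      (∀ z ∈ ball (0:ℂ) 1, deriv f z ≠ 0) ∧
      (∃ N : ℕ, ∀ w ∈ ball (0:ℂ) 1, {z ∈ ball (0:ℂ) 1 | f z = w}.Finite ∧
        {z ∈ ball (0:ℂ) 1 | f z = w}.ncard ≤ N) ∧
      volume (ball (0:ℂ) 1 \ f '' ball (0:ℂ) 1) = 0 ∧
      ¬ Set.InjOn f (ball (0:ℂ) 1) ∧
      f '' ball (0:ℂ) 1 ≠ ball (0:ℂ) 1 := by
  have himage : (fun z => upperHalfDiscMap z ^ 4) '' ball 0 1 = ball 0 1 \ {0} := by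
    rw [← image_pow_four_upperHalfDisc, ← image_upperHalfDiscMap, image_image]
  refine ⟨fun z => upperHalfDiscMap z ^ 4, fun z hz => ?_, ?_, fun z hz => ?_,
    ⟨4, fun w _ => injOn_upperHalfDiscMap.finite_and_ncard_le_of_pow_eq (by norm_num) w⟩, ?_,
    fun h => not_injOn_pow_four_upperHalfDisc ?_, fun h => ?_⟩
  · obtain ⟨d, -, hd⟩ := exists_hasDerivAt_upperHalfDiscMap_ne_zero hz
    exact (hd.differentiableAt.pow 4).differentiableWithinAt
  · exact mapsTo_iff_image_subset.2 (himage ▸ sdiff_subset)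
  · obtain ⟨d, hd0, hd⟩ := exists_hasDerivAt_upperHalfDiscMap_ne_zero hz
    have hg0 : upperHalfDiscMap z ≠ 0 := fun h => by simpa [h] using (upperHalfDiscMap_mem hz).2
    exact deriv_pow_ne_zero hd hd0 hg0 four_ne_zero
  · rw [himage, sdiff_sdiff_right_self]
    exact measure_mono_null inter_subset_right (measure_singleton 0)
  · rw [← image_upperHalfDiscMap]
    exact h.image_of_comp
  · have h0 : (0 : ℂ) ∈ ball (0 : ℂ) 1 \ {0} := by rw [← himage, h]; exact mem_ball_self one_pos
    exact h0.2 rfl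
end

section
/- If f : 𝔻 → 𝔻 is a nonconstant holomorphic function that extends continuously to the closed disc with |f(z)| = 1 for all |z| = 1, then f is a finite Blaschke product. -/
open Complex Metric MeasureTheory Set Filter

/-!
The zeros of `f` in the disc are isolated and cannot accumulate at the circle, where `|f| = 1`,
so there are finitely many of them, counted with multiplicity. Dividing `f` by the Blaschke factor
`b_a` of a zero `a`, which has modulus one on the circle, keeps it holomorphic (the singularity at
`a` is removable), continuous up to the boundary and unimodular on the circle, and lowers the
number of zeros by one. Once no zeros are left, the maximum principle applied to the quotient `g`
and to `1 / g` gives `|g| = 1` on the disc, so `g` is a unimodular constant.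
-/

open ComplexConjugate Topology

section BlaschkeFactor

variable {a z : ℂ}

lemma one_sub_conj_mul_ne_zero (ha : a ∈ ball (0:ℂ) 1) (hz : z ∈ closedBall (0:ℂ) 1) :
    1 - conj a * z ≠ 0 := by
  rw [mem_ball_zero_iff] at ha
  rw [mem_closedBall_zero_iff] at hz
  have : ‖conj a * z‖ < 1 := by
    rw [norm_mul, Complex.norm_conj]
    nlinarith [norm_nonneg a, norm_nonneg z]
  intro h
  rw [← sub_eq_zero.1 h, norm_one] at this
  exact lt_irrefl _ this

lemma norm_one_sub_conj_mul_of_norm_eq_one (hz : ‖z‖ = 1) : ‖1 - conj a * z‖ = ‖z - a‖ := by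
  have hzz : z * conj z = 1 := by
    rw [Complex.mul_conj, Complex.normSq_eq_norm_sq, hz]
    norm_num
  calc ‖1 - conj a * z‖ = ‖z‖ * ‖conj (1 - conj a * z)‖ := by rw [Complex.norm_conj, hz, one_mul]
    _ = ‖z - a‖ := by
      rw [← norm_mul]
      congr 1
      simp only [map_sub, map_one, map_mul, Complex.conj_conj]
      linear_combination (-a) * hzz

lemma norm_blaschkeFactor_of_mem_sphere (ha : a ∈ ball (0:ℂ) 1) (hz : z ∈ sphere (0:ℂ) 1) :
    ‖blaschkeFactor a z‖ = 1 := by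
  rw [mem_sphere_zero_iff_norm] at hz
  rw [blaschkeFactor, norm_div, norm_one_sub_conj_mul_of_norm_eq_one hz, div_self]
  rw [norm_ne_zero_iff, sub_ne_zero]
  rintro rfl
  exact (mem_ball_zero_iff.1 ha).ne hz

end BlaschkeFactor

lemma isFiniteBlaschkeDeg_zero_of_eqOn_const {f : ℂ → ℂ} {c : ℂ} (hc : ‖c‖ = 1)
    (h : EqOn f (fun _ => c) (ball 0 1)) : IsFiniteBlaschkeDeg 0 f :=
  ⟨c, Fin.elim0, hc, fun i => i.elim0, fun z hz => by simp [h hz]⟩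

lemma IsFiniteBlaschkeDeg.blaschkeFactor_mul {n : ℕ} {f q : ℂ → ℂ} {a : ℂ}
    (hq : IsFiniteBlaschkeDeg n q) (ha : a ∈ ball (0:ℂ) 1)
    (h : ∀ z ∈ ball (0:ℂ) 1, f z = blaschkeFactor a z * q z) : IsFiniteBlaschkeDeg (n + 1) f := by
  obtain ⟨lam, b, hlam, hb, hq⟩ := hq
  refine ⟨lam, Fin.cons a b, hlam, Fin.cases ha hb, fun z hz => ?_⟩
  rw [h z hz, hq z hz, Fin.prod_univ_succ, Fin.cons_zero]
  simp only [Fin.cons_succ]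
  ring

/-- `f / blaschkeFactor a`, with the removable singularity at `a` filled in when `f a = 0`. -/
noncomputable def divBlaschkeFactor (f : ℂ → ℂ) (a z : ℂ) : ℂ := (1 - conj a * z) * dslope f a z

section DivBlaschkeFactor

variable {f : ℂ → ℂ} {a z : ℂ}

lemma blaschkeFactor_mul_divBlaschkeFactor (ha : a ∈ ball (0:ℂ) 1) (hfa : f a = 0)
    (hz : z ∈ closedBall (0:ℂ) 1) : blaschkeFactor a z * divBlaschkeFactor f a z = f z := by
  have h := sub_smul_dslope f a z
  rw [hfa, sub_zero, smul_eq_mul] at h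
  have hz' : 1 - z * conj a ≠ 0 := by rw [mul_comm]; exact one_sub_conj_mul_ne_zero ha hz
  rw [blaschkeFactor, divBlaschkeFactor, ← h]
  field_simp

lemma DiffContOnCl.divBlaschkeFactor (hf : DiffContOnCl ℂ f (ball 0 1)) (ha : a ∈ ball (0:ℂ) 1) :
    DiffContOnCl ℂ (divBlaschkeFactor f a) (ball 0 1) := by
  have hdslope : DiffContOnCl ℂ (dslope f a) (ball 0 1) := by
    refine .mk_ball ((differentiableOn_dslope (isOpen_ball.mem_nhds ha)).2 hf.differentiableOn) ?_
    exact (continuousOn_dslope (closedBall_mem_nhds_of_mem ha)).2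
      ⟨hf.continuousOn_ball, hf.differentiableAt isOpen_ball ha⟩
  exact ((differentiable_const _).sub (differentiable_id.const_mul _)).diffContOnCl.smul hdslope

lemma analyticOrderAt_eq_add_analyticOrderAt_divBlaschkeFactor
    (hf : DifferentiableOn ℂ f (ball 0 1)) (ha : a ∈ ball (0:ℂ) 1) (hfa : f a = 0)
    (hz : z ∈ ball (0:ℂ) 1) :
    analyticOrderAt f z =
      analyticOrderAt (· - a) z + analyticOrderAt (divBlaschkeFactor f a) z := by
  have hdslope : AnalyticAt ℂ (dslope f a) z :=
    ((differentiableOn_dslope (isOpen_ball.mem_nhds ha)).2 hf).analyticAt (isOpen_ball.mem_nhds hz)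
  have hf_eq : f = (· - a) * dslope f a := by
    funext w
    simpa [hfa] using (sub_smul_dslope f a w).symm
  have hunit : analyticOrderAt (fun w => 1 - conj a * w) z = 0 := by
    refine (AnalyticAt.analyticOrderAt_eq_zero (by fun_prop)).2 ?_
    exact one_sub_conj_mul_ne_zero ha (ball_subset_closedBall hz)
  have hq : divBlaschkeFactor f a = (fun w => 1 - conj a * w) * dslope f a := rfl
  rw [hq, analyticOrderAt_mul (by fun_prop) hdslope, hunit, zero_add,
    ← analyticOrderAt_mul (by fun_prop) hdslope, ← hf_eq]

end DivBlaschkeFactor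

structure IsInnerContOnCl (f : ℂ → ℂ) : Prop where
  diffContOnCl : DiffContOnCl ℂ f (ball 0 1)
  norm_eq_one : ∀ z ∈ sphere (0:ℂ) 1, ‖f z‖ = 1

namespace IsInnerContOnCl

variable {f : ℂ → ℂ} {a z : ℂ}

lemma norm_le_one (hf : IsInnerContOnCl f) (hz : z ∈ closedBall (0:ℂ) 1) : ‖f z‖ ≤ 1 := by
  refine Complex.norm_le_of_forall_mem_frontier_norm_le isBounded_ball hf.diffContOnCl
    (fun w hw => ?_) (by rwa [closure_ball 0 one_ne_zero])
  rw [frontier_ball 0 one_ne_zero] at hw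
  exact (hf.norm_eq_one w hw).le

lemma ne_zero_of_mem_sphere (hf : IsInnerContOnCl f) (hz : z ∈ sphere (0:ℂ) 1) : f z ≠ 0 :=
  norm_ne_zero_iff.1 (by simp [hf.norm_eq_one z hz])

lemma inv (hf : IsInnerContOnCl f) (h0 : ∀ z ∈ ball (0:ℂ) 1, f z ≠ 0) :
    IsInnerContOnCl f⁻¹ where
  diffContOnCl := hf.diffContOnCl.inv fun z hz => by
    rw [closure_ball 0 one_ne_zero, ← ball_union_sphere] at hz
    exact hz.elim (h0 z) hf.ne_zero_of_mem_sphere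
  norm_eq_one z hz := by simp [hf.norm_eq_one z hz]

lemma exists_eqOn_const_of_ne_zero (hf : IsInnerContOnCl f) (h0 : ∀ z ∈ ball (0:ℂ) 1, f z ≠ 0) :
    ∃ c : ℂ, ‖c‖ = 1 ∧ EqOn f (fun _ => c) (ball 0 1) := by
  have hnorm : ∀ z ∈ ball (0:ℂ) 1, ‖f z‖ = 1 := fun z hz => by
    have h := (hf.inv h0).norm_le_one (ball_subset_closedBall hz)
    rw [Pi.inv_apply, norm_inv, inv_le_one₀ (norm_pos_iff.2 (h0 z hz))] at h
    exact le_antisymm (hf.norm_le_one (ball_subset_closedBall hz)) h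
  have h00 : (0:ℂ) ∈ ball (0:ℂ) 1 := mem_ball_self one_pos
  refine ⟨f 0, hnorm 0 h00, Complex.eqOn_of_isPreconnected_of_isMaxOn_norm
    (convex_ball 0 1).isPreconnected isOpen_ball hf.diffContOnCl.differentiableOn h00 ?_⟩
  intro z hz
  simp [hnorm z hz, hnorm 0 h00]

lemma analyticOrderAt_ne_top (hf : IsInnerContOnCl f) (hz : z ∈ ball (0:ℂ) 1) :
    analyticOrderAt f z ≠ ⊤ := by
  intro htop
  have hzero : EqOn f 0 (ball 0 1) :=
    (hf.diffContOnCl.differentiableOn.analyticOnNhd isOpen_ball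
      ).eqOn_zero_of_preconnected_of_eventuallyEq_zero (convex_ball 0 1).isPreconnected hz
      (analyticOrderAt_eq_top.1 htop)
  have hzero' : EqOn f 0 (closure (ball 0 1)) :=
    hzero.of_subset_closure hf.diffContOnCl.continuousOn continuousOn_const subset_closure le_rfl
  have h1 : (1:ℂ) ∈ sphere (0:ℂ) 1 := by simp
  exact hf.ne_zero_of_mem_sphere h1
    (hzero' (by rw [closure_ball 0 one_ne_zero]; exact sphere_subset_closedBall h1))

lemma finite_zeros (hf : IsInnerContOnCl f) : (ball (0:ℂ) 1 ∩ f ⁻¹' {0}).Finite := by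
  have hK : ball (0:ℂ) 1 ∩ f ⁻¹' {0} = closedBall 0 1 ∩ f ⁻¹' {0} := by
    refine Subset.antisymm (inter_subset_inter_left _ ball_subset_closedBall) ?_
    rintro z ⟨hz, hfz⟩
    rw [← ball_union_sphere] at hz
    exact ⟨hz.resolve_right fun hs => hf.ne_zero_of_mem_sphere hs hfz, hfz⟩
  refine IsCompact.finite ?_ (isDiscrete_iff_nhdsNE.2 fun z ⟨hz, _⟩ => ?_)
  · rw [hK]
    exact (isCompact_closedBall 0 1).of_isClosed_subset
      (hf.diffContOnCl.continuousOn_ball.preimage_isClosed_of_isClosed isClosed_closedBall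
        isClosed_singleton) inter_subset_left
  · have hne : ∀ᶠ w in 𝓝[≠] z, f w ≠ 0 :=
      (hf.diffContOnCl.differentiableOn.analyticAt (isOpen_ball.mem_nhds hz)
        ).eventually_eq_zero_or_eventually_ne_zero.resolve_left
        fun h => hf.analyticOrderAt_ne_top hz (analyticOrderAt_eq_top.2 h)
    exact inf_principal_eq_bot.2 (hne.mono fun w hw hmem => hw hmem.2)

end IsInnerContOnCl

lemma isInnerContOnCl_divBlaschkeFactor {f : ℂ → ℂ} {a : ℂ} (hf : IsInnerContOnCl f)
    (ha : a ∈ ball (0:ℂ) 1) (hfa : f a = 0) : IsInnerContOnCl (divBlaschkeFactor f a) where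
  diffContOnCl := hf.diffContOnCl.divBlaschkeFactor ha
  norm_eq_one z hz := by
    rw [← hf.norm_eq_one z hz, ← blaschkeFactor_mul_divBlaschkeFactor ha hfa
      (sphere_subset_closedBall hz), norm_mul, norm_blaschkeFactor_of_mem_sphere ha hz, one_mul]

lemma IsInnerContOnCl.sum_analyticOrderNatAt_divBlaschkeFactor {f : ℂ → ℂ} {a : ℂ}
    (hf : IsInnerContOnCl f) {Z : Finset ℂ} (hZ : ↑Z ⊆ ball (0:ℂ) 1) (haZ : a ∈ Z)
    (hfa : f a = 0) :
    ∑ z ∈ Z, analyticOrderNatAt f z =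
      ∑ z ∈ Z, analyticOrderNatAt (divBlaschkeFactor f a) z + 1 := by
  have ha := hZ haZ
  have hterm : ∀ z ∈ Z, analyticOrderNatAt f z =
      analyticOrderNatAt (divBlaschkeFactor f a) z + if a = z then 1 else 0 := by
    intro z hz
    have hord := analyticOrderAt_eq_add_analyticOrderAt_divBlaschkeFactor
      hf.diffContOnCl.differentiableOn ha hfa (hZ hz)
    have hfin := (isInnerContOnCl_divBlaschkeFactor hf ha hfa).analyticOrderAt_ne_top (hZ hz)
    rcases eq_or_ne a z with rfl | hne
    · simp [analyticOrderNatAt, hord, ENat.toNat_add, hfin, add_comm]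
    · simp [analyticOrderNatAt, hord, hne.symm, hne]
  rw [Finset.sum_congr rfl hterm, Finset.sum_add_distrib, Finset.sum_ite_eq Z a, if_pos haZ]

lemma IsInnerContOnCl.exists_isFiniteBlaschkeDeg_of_zeros_subset {Z : Finset ℂ}
    (hZ : ↑Z ⊆ ball (0:ℂ) 1) {f : ℂ → ℂ} (hf : IsInnerContOnCl f)
    (hfZ : ∀ z ∈ ball (0:ℂ) 1, f z = 0 → z ∈ Z) : ∃ n, IsFiniteBlaschkeDeg n f := by
  induction hN : ∑ z ∈ Z, analyticOrderNatAt f z using Nat.strong_induction_on generalizing f with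
  | _ N ih =>
  by_cases h0 : ∀ z ∈ ball (0:ℂ) 1, f z ≠ 0
  · obtain ⟨c, hc, hfc⟩ := hf.exists_eqOn_const_of_ne_zero h0
    exact ⟨0, isFiniteBlaschkeDeg_zero_of_eqOn_const hc hfc⟩
  push Not at h0
  obtain ⟨a, ha, hfa⟩ := h0
  have hfactor : ∀ z ∈ ball (0:ℂ) 1, f z = blaschkeFactor a z * divBlaschkeFactor f a z :=
    fun z hz => (blaschkeFactor_mul_divBlaschkeFactor ha hfa (ball_subset_closedBall hz)).symm
  have hqZ : ∀ z ∈ ball (0:ℂ) 1, divBlaschkeFactor f a z = 0 → z ∈ Z := fun z hz hqz =>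
    hfZ z hz (by rw [hfactor z hz, hqz, mul_zero])
  have hsum := hf.sum_analyticOrderNatAt_divBlaschkeFactor hZ (hfZ a ha hfa) hfa
  obtain ⟨n, hn⟩ := ih _ (by omega) (isInnerContOnCl_divBlaschkeFactor hf ha hfa) hqZ rfl
  exact ⟨n + 1, hn.blaschkeFactor_mul ha hfactor⟩

lemma IsInnerContOnCl.exists_isFiniteBlaschkeDeg {f : ℂ → ℂ} (hf : IsInnerContOnCl f) :
    ∃ n, IsFiniteBlaschkeDeg n f :=
  hf.exists_isFiniteBlaschkeDeg_of_zeros_subset (Z := hf.finite_zeros.toFinset)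
    (fun _ hz => (hf.finite_zeros.mem_toFinset.1 hz).1)
    fun _ hz hfz => hf.finite_zeros.mem_toFinset.2 ⟨hz, hfz⟩

theorem stmt_14_general (f : ℂ → ℂ) (hf : DifferentiableOn ℂ f (ball (0:ℂ) 1))
    (hnc : ¬ ∃ c : ℂ, ∀ z ∈ ball (0:ℂ) 1, f z = c)
    (hcont : ContinuousOn f (closedBall (0:ℂ) 1))
    (hbd : ∀ z : ℂ, ‖z‖ = 1 → ‖f z‖ = 1) :
    IsFiniteBlaschke f := by
  have hinner : IsInnerContOnCl f := ⟨.mk_ball hf hcont, fun z hz => hbd z (by simpa using hz)⟩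
  obtain ⟨n, hn⟩ := hinner.exists_isFiniteBlaschkeDeg
  refine ⟨n, Nat.pos_of_ne_zero ?_, hn⟩
  rintro rfl
  obtain ⟨lam, _, -, -, hlam⟩ := hn
  exact hnc ⟨lam, by simpa using hlam⟩

theorem stmt_14 (f : ℂ → ℂ) (hf : DifferentiableOn ℂ f (ball (0:ℂ) 1))
    (hmaps : Set.MapsTo f (ball (0:ℂ) 1) (ball (0:ℂ) 1))
    (hnc : ¬ ∃ c : ℂ, ∀ z ∈ ball (0:ℂ) 1, f z = c)
    (hcont : ContinuousOn f (closedBall (0:ℂ) 1))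
    (hbd : ∀ z : ℂ, ‖z‖ = 1 → ‖f z‖ = 1) :
    IsFiniteBlaschke f :=
  stmt_14_general f hf hnc hcont hbd
end

section
/- The function f(z) = 10⁻¹⁰ e^{10z} maps 𝔻 into 𝔻, has nonvanishing derivative, has bounded valence (at most 4 preimages for any point), but is not injective on 𝔻. -/
open Complex Metric Set

/-!
For `f z = c * exp (a * z)` with `a > 0` real: `‖f z‖ = ‖c‖ * exp (a * Re z) < ‖c‖ * exp a`, and
`f' = a * f` never vanishes. Two points of a fibre of `f` differ by an integer multiple of
`2πi / a`, so the fibres inside the disc are vertical progressions of step `2π / a` in a strip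
of height `2`: for `a = 10` that leaves room for at most `4` points, yet `±πi/10` already give a
collision.
-/

theorem Set.ncard_le_of_sub_eq_int_mul {T : Set ℝ} {a b d : ℝ} {n : ℕ} (hd : 0 < d)
    (hT : T ⊆ Ioo a b) (hcong : ∀ x ∈ T, ∀ y ∈ T, ∃ k : ℤ, x - y = k * d)
    (hn : b - a ≤ n * d) : T.Finite ∧ T.ncard ≤ n := by
  set slot : ℝ → ℤ := fun x => ⌊(x - a) / d⌋
  have hmaps : MapsTo slot T (Finset.Ico (0 : ℤ) n : Set ℤ) := by
    intro x hx
    obtain ⟨hax, hxb⟩ := hT hx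
    simp only [Finset.coe_Ico, mem_Ico, slot]
    refine ⟨Int.floor_nonneg.mpr (div_nonneg (by linarith) hd.le), Int.floor_lt.mpr ?_⟩
    rw [div_lt_iff₀ hd]
    push_cast
    linarith
  have hinj : InjOn slot T := by
    intro x hx y hy hxy
    obtain ⟨k, hk⟩ := hcong x hx y hy
    have hlt : |(x - a) / d - (y - a) / d| < 1 := Int.abs_sub_lt_one_of_floor_eq_floor hxy
    rw [← sub_div, sub_sub_sub_cancel_right, hk, mul_div_cancel_right₀ _ hd.ne'] at hlt
    have hk0 : k = 0 := by
      rw [← Int.cast_abs] at hlt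
      exact Int.abs_lt_one_iff.mp (by exact_mod_cast hlt)
    simpa [hk0, sub_eq_zero] using hk
  refine ⟨Finite.of_injOn hmaps hinj (Finset.finite_toSet _), ?_⟩
  calc T.ncard ≤ (Finset.Ico (0 : ℤ) n : Set ℤ).ncard := ncard_le_ncard_of_injOn slot hmaps hinj
    _ = n := by rw [ncard_coe_finset, Int.card_Ico]; simp

namespace Complex

theorem re_eq_and_exists_int_of_exp_ofReal_mul_eq {a : ℝ} (ha : a ≠ 0) {z z' : ℂ}
    (h : cexp (a * z) = cexp (a * z')) :
    z.re = z'.re ∧ ∃ k : ℤ, z.im - z'.im = k * (2 * Real.pi / a) := by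
  obtain ⟨k, hk⟩ := exp_eq_exp_iff_exists_int.mp h
  have hre := congrArg re hk
  have him := congrArg im hk
  simp only [mul_re, mul_im, ofReal_re, ofReal_im, intCast_re, intCast_im, I_re, I_im, add_re,
    add_im, re_ofNat, im_ofNat] at hre him
  refine ⟨mul_left_cancel₀ ha (by linarith), k, ?_⟩
  rw [mul_div_assoc', eq_div_iff ha]
  linarith

theorem mapsTo_const_mul_exp_ball {c a : ℂ} (h : ‖c‖ * Real.exp ‖a‖ < 1) :
    MapsTo (fun z => c * cexp (a * z)) (ball 0 1) (ball 0 1) := by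
  intro z hz
  rw [mem_ball_zero_iff] at hz ⊢
  calc ‖c * cexp (a * z)‖ ≤ ‖c‖ * Real.exp ‖a * z‖ := by
        rw [norm_mul]; gcongr; exact norm_exp_le_exp_norm _
    _ ≤ ‖c‖ * Real.exp ‖a‖ := by
        rw [norm_mul]; gcongr; exact mul_le_of_le_one_right (norm_nonneg a) hz.le
    _ < 1 := h

theorem deriv_const_mul_exp_ne_zero {c a : ℂ} (hc : c ≠ 0) (ha : a ≠ 0) (z : ℂ) :
    deriv (fun z => c * cexp (a * z)) z ≠ 0 := by
  have hderiv : HasDerivAt (fun z => c * cexp (a * z)) (c * (cexp (a * z) * a)) z :=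
    (((hasDerivAt_id z).const_mul a).cexp.congr_deriv (by simp)).const_mul c
  rw [hderiv.deriv]
  exact mul_ne_zero hc (mul_ne_zero (exp_ne_zero _) ha)

theorem fiber_const_mul_exp_ball {c : ℂ} (hc : c ≠ 0) {a : ℝ} (ha : 0 < a) {n : ℕ}
    (hn : 2 ≤ n * (2 * Real.pi / a)) (w : ℂ) :
    {z ∈ ball (0 : ℂ) 1 | c * cexp (a * z) = w}.Finite ∧
      {z ∈ ball (0 : ℂ) 1 | c * cexp (a * z) = w}.ncard ≤ n := by
  set S := {z ∈ ball (0 : ℂ) 1 | c * cexp (a * z) = w}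
  have hexp : ∀ z ∈ S, ∀ z' ∈ S, cexp (a * z) = cexp (a * z') := fun z hz z' hz' =>
    mul_left_cancel₀ hc (hz.2.trans hz'.2.symm)
  have hinj : InjOn im S := fun z hz z' hz' him =>
    Complex.ext (re_eq_and_exists_int_of_exp_ofReal_mul_eq ha.ne' (hexp z hz z' hz')).1 him
  have hstrip : im '' S ⊆ Ioo (-1) 1 := by
    rintro _ ⟨z, hz, rfl⟩
    exact abs_lt.mp ((abs_im_le_norm z).trans_lt (mem_ball_zero_iff.mp hz.1))
  have hcong : ∀ x ∈ im '' S, ∀ y ∈ im '' S, ∃ k : ℤ, x - y = k * (2 * Real.pi / a) := by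
    rintro _ ⟨z, hz, rfl⟩ _ ⟨z', hz', rfl⟩
    exact (re_eq_and_exists_int_of_exp_ofReal_mul_eq ha.ne' (hexp z hz z' hz')).2
  obtain ⟨hfin, hcard⟩ := Set.ncard_le_of_sub_eq_int_mul (by positivity) hstrip hcong
    ((by norm_num : (1 : ℝ) - -1 = 2).trans_le hn)
  exact ⟨hfin.of_finite_image hinj, hinj.ncard_image ▸ hcard⟩

theorem not_injOn_const_mul_exp_ball (c : ℂ) {a : ℝ} (ha : Real.pi < a) :
    ¬ InjOn (fun z => c * cexp (a * z)) (ball 0 1) := by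
  have ha0 : 0 < a := Real.pi_pos.trans ha
  have hr : Real.pi / a < 1 := (div_lt_one ha0).mpr ha
  have hmem : ∀ t : ℝ, |t| < 1 → (t : ℂ) * I ∈ ball (0 : ℂ) 1 := fun t ht => by
    simpa using ht
  intro hinj
  have hsame := hinj (hmem (Real.pi / a) (by rwa [abs_of_pos (by positivity)]))
    (hmem (-(Real.pi / a)) (by rwa [abs_neg, abs_of_pos (by positivity)])) (by
      simp only
      have hπ : (a : ℂ) * ((Real.pi / a : ℝ) * I) = Real.pi * I := by
        have : (a : ℂ) ≠ 0 := ofReal_ne_zero.mpr ha0.ne'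
        push_cast; field_simp
      rw [ofReal_neg, neg_mul, mul_neg, hπ, exp_neg, exp_pi_mul_I]
      norm_num)
  have : Real.pi / a = -(Real.pi / a) := by exact_mod_cast mul_right_cancel₀ I_ne_zero hsame
  linarith [div_pos Real.pi_pos ha0]

end Complex

theorem Real.exp_ten_lt : Real.exp 10 < 10 ^ 10 :=
  calc Real.exp 10 = Real.exp 1 ^ 10 := by rw [← Real.exp_nat_mul]; norm_num
    _ < 3 ^ 10 := by gcongr; exact Real.exp_one_lt_three
    _ < 10 ^ 10 := by norm_num

theorem stmt_17 (f : ℂ → ℂ)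
    (hf : f = fun z => ((10:ℂ) ^ (10:ℕ))⁻¹ * Complex.exp (10 * z)) :
    Set.MapsTo f (ball (0:ℂ) 1) (ball (0:ℂ) 1) ∧
    (∀ z : ℂ, deriv f z ≠ 0) ∧
    (∀ w : ℂ, {z ∈ ball (0:ℂ) 1 | f z = w}.Finite ∧
      {z ∈ ball (0:ℂ) 1 | f z = w}.ncard ≤ 4) ∧
    ¬ Set.InjOn f (ball (0:ℂ) 1) := by
  subst hf
  have hc : ((10:ℂ) ^ (10:ℕ))⁻¹ ≠ 0 := by norm_num
  have h10 : ((10 : ℝ) : ℂ) = 10 := by norm_num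
  refine ⟨mapsTo_const_mul_exp_ball ?_, deriv_const_mul_exp_ne_zero hc (by norm_num),
    fun w => ?_, ?_⟩
  · simpa [inv_mul_lt_one₀] using Real.exp_ten_lt
  · simpa only [h10] using fiber_const_mul_exp_ball hc (a := 10) (n := 4) (by norm_num)
      (by linarith [Real.pi_gt_three]) w
  · simpa only [h10] using not_injOn_const_mul_exp_ball _ (a := 10)
      (by linarith [Real.pi_lt_four])
end
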